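/- arXiv:2201.13353 — 2 statements merged into one kernel-verified Lean document; each statement's English description precedes it below -/
import Mathlib

section
/- Let j ≥ 3 and 0 ≤ r ≤ j−3 be integers. Then the rational number Σ_{s=r}^{j−1} (−1)^s · (1/(j+1−s)) · binom(j+1−s, s−r) · C_{j−s−1} equals 0, where C_n is the n-th Catalan number and binom(a,b) = 0 when b < 0 or b > a. -/
/-!
Put `k = s - r` and `m = j - 1 - s`. The summand becomes `(-1)^r` times
`catalanTerm k m = (-1)^k binom(m+2, k) C_m / (m+2)`, so the claim is that `catalanTerm` sums to zero
along every antidiagonal `k + m = N` with `N ≥ 2`. (In generating functions: the Catalan series `c`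
satisfies `y c(y) = x` for `y = x(1-x)`, which turns `∑_N x^N ∑_{k+m=N} catalanTerm k m` into the
polynomial `1/2 - 2x/3`.)
Along an antidiagonal the term is hypergeometric in `k`, and Gosper's algorithm produces a
hypergeometric antidifference, so the sum telescopes to a boundary term, which vanishes for `N ≥ 2`.
-/

/-- The binomial coefficient `binom a b : ℚ` for integer arguments, equal to `0`
when `b < 0` or `b > a`. -/
def binom (a b : ℤ) : ℚ :=
  if 0 ≤ b ∧ b ≤ a then (a.toNat.choose b.toNat : ℚ) else 0

open Finset
open scoped Nat

theorem binom_natCast (a b : ℕ) : binom a b = a.choose b := by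
  unfold binom
  split_ifs with h
  · simp
  · rw [Nat.choose_eq_zero_of_lt (by omega), Nat.cast_zero]

theorem cast_catalan_eq_factorial_div (m : ℕ) :
    (catalan m : ℚ) = (2 * m)! / (m ! * (m + 1)!) := by
  have h := congrArg (Nat.cast : ℕ → ℚ) (succ_mul_catalan_eq_centralBinom m)
  rw [Nat.centralBinom_eq_two_mul_choose, two_mul, Nat.cast_add_choose, ← two_mul] at h
  rw [eq_div_iff (by positivity)] at h
  rw [Nat.factorial_succ, eq_div_iff (by positivity)]
  push_cast at h ⊢
  linear_combination h

theorem sum_antidiagonal_sub {M : Type*} [AddCommGroup M] (g : ℕ → ℕ → M) (n : ℕ) :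
    ∑ p ∈ antidiagonal n, (g (p.1 + 1) p.2 - g p.1 (p.2 + 1)) = g (n + 1) 0 - g 0 (n + 1) := by
  induction n generalizing g with
  | zero => simp
  | succ n ih =>
    rw [Nat.sum_antidiagonal_succ, ih fun k m => g (k + 1) m]
    abel

def catalanTerm (k m : ℕ) : ℚ := (-1) ^ k * (m + 2).choose k * catalan m / (m + 2)

theorem catalanTerm_eq_factorial {k m : ℕ} (h : k ≤ m + 2) :
    catalanTerm k m = (-1) ^ k * (2 * m)! / (k ! * m ! * (m + 2 - k)!) := by
  rw [catalanTerm, Nat.cast_choose ℚ h, cast_catalan_eq_factorial_div, Nat.factorial_succ (m + 1)]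
  push_cast
  field_simp
  ring

theorem catalanTerm_of_lt {k m : ℕ} (h : m + 2 < k) : catalanTerm k m = 0 := by
  simp [catalanTerm, Nat.choose_eq_zero_of_lt h]

theorem catalanTerm_succ_left (k m : ℕ) :
    2 * (k + 1) * (2 * m + 1) * catalanTerm (k + 1) m =
      -((m + 3 - k) * (m + 2 - k)) * catalanTerm k (m + 1) := by
  rcases le_or_gt k (m + 1) with hk | hk
  · obtain ⟨d, hd⟩ : ∃ d, m + 1 = k + d := ⟨m + 1 - k, by omega⟩
    rw [catalanTerm_eq_factorial (by omega), catalanTerm_eq_factorial (by omega),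
      show m + 2 - (k + 1) = d by omega, show m + 1 + 2 - k = d + 2 by omega,
      show 2 * (m + 1) = 2 * m + 1 + 1 by ring]
    simp only [Nat.factorial_succ, Nat.cast_mul, pow_succ]
    have hd : (m : ℚ) + 1 = k + d := by exact_mod_cast hd
    have h3 : (m : ℚ) + 3 - k = d + 2 := by linear_combination hd
    have h2 : (m : ℚ) + 2 - k = d + 1 := by linear_combination hd
    rw [h3, h2]
    push_cast
    field_simp
    ring
  · rw [catalanTerm_of_lt (by omega : m + 2 < k + 1), mul_zero]
    obtain rfl | rfl | hk : k = m + 2 ∨ k = m + 3 ∨ m + 3 < k := by omega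
    · push_cast; ring
    · push_cast; ring
    · rw [catalanTerm_of_lt (by omega), mul_zero]

/-- Gosper's certificate: `gosperCert N k * catalanTerm k (N - k)` is an antidifference in `k`. -/
def gosperCert (N k : ℚ) : ℚ :=
  2 * k * (8 * k ^ 2 + 2 * (N - 6) * (N + 1) * k - (2 * N + 1) * (N ^ 2 - N - 4)) /
    ((N - 1) * N * (N + 1) * (N + 2))

theorem gosperCert_mul_sub_gosperCert {N k : ℚ} (hN : (N - 1) * N * (N + 1) * (N + 2) ≠ 0)
    (hk : 2 * (k + 1) * (2 * N - 2 * k - 1) ≠ 0) :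
    gosperCert N (k + 1) * (-((N - 2 * k + 2) * (N - 2 * k + 1)) / (2 * (k + 1) * (2 * N - 2 * k - 1)))
      - gosperCert N k = 1 := by
  unfold gosperCert
  rw [div_mul_div_comm, div_sub_div _ _ (mul_ne_zero hN hk) hN,
    div_eq_one_iff_eq (mul_ne_zero (mul_ne_zero hN hk) hN)]
  ring

def gosperTerm (k m : ℕ) : ℚ := gosperCert (k + m) k * catalanTerm k m

theorem catalanTerm_eq_gosperTerm_sub {k m : ℕ} (h : 1 ≤ k + m) :
    catalanTerm k (m + 1) = gosperTerm (k + 1) m - gosperTerm k (m + 1) := by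
  have hkm : (1 : ℚ) ≤ k + m := by exact_mod_cast h
  have hN : ((k + m + 1 : ℚ) - 1) * (k + m + 1) * (k + m + 1 + 1) * (k + m + 1 + 2) ≠ 0 := by
    rw [add_sub_cancel_right]
    have : (0 : ℚ) < k + m := by linarith
    positivity
  have hk : 2 * ((k : ℚ) + 1) * (2 * (k + m + 1) - 2 * k - 1) ≠ 0 := by
    rw [show 2 * ((k : ℚ) + m + 1) - 2 * k - 1 = 2 * m + 1 by ring]
    positivity
  have hρ : catalanTerm (k + 1) m =
      -((k + m + 1 - 2 * k + 2) * (k + m + 1 - 2 * k + 1)) /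
        (2 * (k + 1) * (2 * (k + m + 1) - 2 * k - 1)) * catalanTerm k (m + 1) := by
    rw [div_mul_eq_mul_div, eq_div_iff hk]
    linear_combination catalanTerm_succ_left k m
  rw [gosperTerm, gosperTerm, hρ]
  push_cast
  rw [show (k : ℚ) + 1 + m = k + m + 1 by ring, show (k : ℚ) + (m + 1) = k + m + 1 by ring]
  linear_combination (-catalanTerm k (m + 1)) * gosperCert_mul_sub_gosperCert hN hk

theorem catalanTerm_add_gosperTerm_eq_zero {N : ℕ} (hN : 2 ≤ N) :
    catalanTerm N 0 + gosperTerm N 0 = 0 := by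
  rcases hN.eq_or_lt with rfl | hN
  · norm_num [gosperTerm, gosperCert]
  · simp [gosperTerm, catalanTerm_of_lt (show 0 + 2 < N by omega)]

theorem sum_antidiagonal_catalanTerm {N : ℕ} (hN : 2 ≤ N) :
    ∑ p ∈ antidiagonal N, catalanTerm p.1 p.2 = 0 := by
  obtain ⟨n, rfl⟩ : ∃ n, N = n + 1 := ⟨N - 1, by omega⟩
  have htel : ∑ p ∈ antidiagonal n, catalanTerm p.1 (p.2 + 1) =
      gosperTerm (n + 1) 0 - gosperTerm 0 (n + 1) := by
    rw [← sum_antidiagonal_sub]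
    refine sum_congr rfl fun p hp => catalanTerm_eq_gosperTerm_sub ?_
    rw [mem_antidiagonal.mp hp]
    omega
  have hG : gosperTerm 0 (n + 1) = 0 := by simp [gosperTerm, gosperCert]
  rw [Nat.sum_antidiagonal_succ', htel, hG, sub_zero, catalanTerm_add_gosperTerm_eq_zero hN]

theorem summand_eq_catalanTerm {j r s : ℕ} (hrs : r ≤ s) (hsj : s < j) :
    (-1 : ℚ) ^ s * (1 / ((j : ℚ) + 1 - s)) * binom ((j : ℤ) + 1 - s) ((s : ℤ) - r) *
        catalan (j - s - 1) = (-1) ^ r * catalanTerm (s - r) (j - 1 - s) := by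
  obtain ⟨k, rfl⟩ := Nat.exists_eq_add_of_le hrs
  obtain ⟨m, rfl⟩ : ∃ m, j = r + k + m + 1 := ⟨j - (r + k) - 1, by omega⟩
  have hz : ((r + k + m + 1 : ℕ) : ℤ) + 1 - (r + k : ℕ) = (m + 2 : ℕ) := by push_cast; ring
  have hq : ((r + k + m + 1 : ℕ) : ℚ) + 1 - (r + k : ℕ) = m + 2 := by push_cast; ring
  rw [hz, hq, Nat.cast_add r k, add_sub_cancel_left, binom_natCast, Nat.add_sub_cancel_left,
    show r + k + m + 1 - (r + k) - 1 = m by omega, show r + k + m + 1 - 1 - (r + k) = m by omega,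
    catalanTerm, pow_add]
  ring

/-- For `j ≥ 3` and `0 ≤ r ≤ j−3`, the sum
`Σ_{s=r}^{j−1} (−1)^s·(1/(j+1−s))·binom(j+1−s, s−r)·C_{j−s−1}` vanishes. -/
theorem A_r_vanishes (j r : ℕ) (hj : 3 ≤ j) (hr : r ≤ j - 3) :
    ∑ s ∈ Finset.Icc r (j - 1),
      (-1 : ℚ) ^ s * (1 / ((j : ℚ) + 1 - s)) *
        binom ((j : ℤ) + 1 - s) ((s : ℤ) - r) * catalan (j - s - 1) = 0 := by
  calc _ = ∑ s ∈ Icc r (j - 1), (-1) ^ r * catalanTerm (s - r) (j - 1 - s) :=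
        sum_congr rfl fun s hs => summand_eq_catalanTerm (mem_Icc.mp hs).1 (by grind)
    _ = (-1) ^ r * ∑ p ∈ antidiagonal (j - 1 - r), catalanTerm p.1 p.2 := by
      rw [mul_sum]
      refine sum_nbij' (fun s => (s - r, j - 1 - s)) (fun p => r + p.1) ?_ ?_ ?_ ?_ fun _ _ => rfl
      all_goals
        intro _ h
        simp only [mem_Icc, HasAntidiagonal.mem_antidiagonal, Prod.ext_iff] at h ⊢
        omega
    _ = 0 := by rw [sum_antidiagonal_catalanTerm (by omega), mul_zero]
end

section
/- For every integer j ≥ 2, the determinant of the (j−1)×(j−1) matrix C with entries c_{r,s} = binom(j+1−s, s−r), where the row index r ranges over 0 ≤ r ≤ j−2 and the column index s ranges over 1 ≤ s ≤ j−1 (with binom(a,b) = 0 when b < 0 or b > a), equals the Catalan number C_j = binom(2j, j)/(j+1); in particular this matrix is invertible over ℚ. -/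
/-!
Multiplying row `r` of the `n × n` matrix `M r s = binom(j - s, s + 1 - r)` by `j + 1 - r` and
column `s` by `s + 1` gives `L * N`, where `L` is lower bidiagonal with diagonal `j + 1 + r` and
subdiagonal `r`, and `N r s = (s + 1 - r) binom(j - s, s + 1 - r)` is upper triangular with diagonal
`j - r`; entrywise this is the absorption rule `(b + 1) binom(a, b + 1) = (a - b) binom(a, b)`.
Hence `det M = ∏ (j + 1 + r)(j - r) / ((j + 1 - r)(r + 1))`, the ballot number
`(j + 1 - n) / (j + 1) * binom(j + n, n)`, which for `n = j - 1` is the Catalan number `C_j`.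
-/

open Matrix Finset

theorem binom_of_neg {a b : ℤ} (hb : b < 0) : binom a b = 0 :=
  if_neg fun h => hb.not_ge h.1

theorem binom_succ_mul (a b : ℤ) : (b + 1) * binom a (b + 1) = (a - b) * binom a b := by
  unfold binom
  split_ifs with h₁ h₂ h₂
  · obtain ⟨n, rfl⟩ := Int.eq_ofNat_of_zero_le (h₂.1.trans h₂.2)
    obtain ⟨k, rfl⟩ := Int.eq_ofNat_of_zero_le h₂.1
    have h := congrArg (Nat.cast : ℕ → ℚ) (Nat.choose_succ_right_eq n k)
    push_cast [Nat.cast_sub (show k ≤ n by omega)] at h ⊢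
    rw [show ((k : ℤ) + 1).toNat = k + 1 by omega, Int.toNat_natCast, Int.toNat_natCast]
    linear_combination h
  · simp [show b = -1 by omega]
  · simp [show b = a by omega]
  · simp

theorem binom_one {a : ℤ} (ha : 0 ≤ a) : binom a 1 = a := by
  simpa [binom, ha] using binom_succ_mul a 0

def weightedBinom (j r s : ℤ) : ℚ := (s + 1 - r) * binom (j - s) (s + 1 - r)

theorem binom_row_relation (j r s : ℤ) :
    (j + 1 - r) * (s + 1) * binom (j - s) (s + 1 - r) =
      (j + 1 + r) * weightedBinom j r s + r * weightedBinom j (r - 1) s := by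
  have h := binom_succ_mul (j - s) (s + 1 - r)
  rw [weightedBinom, weightedBinom, show s + 1 - (r - 1) = s + 1 - r + 1 by ring]
  push_cast at h ⊢
  linear_combination (-r : ℚ) * h

theorem Fin.sum_ite_val_eq {M : Type*} [AddCommMonoid M] {n m : ℕ} (hm : m < n)
    (g : Fin n → M) : ∑ k : Fin n, (if (k : ℕ) = m then g k else 0) = g ⟨m, hm⟩ := by
  simpa [Fin.ext_iff] using Fintype.sum_ite_eq' (⟨m, hm⟩ : Fin n) g

section

variable (j n : ℕ)

def binomMatrix : Matrix (Fin n) (Fin n) ℚ :=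
  of fun r s => binom ((j : ℤ) - s) ((s : ℤ) + 1 - r)

def weightedBinomMatrix : Matrix (Fin n) (Fin n) ℚ :=
  of fun r s => weightedBinom j r s

-- At `r = 0` the truncated `r - 1` points at the diagonal, but with coefficient `r = 0`.
def bidiagonalFactor : Matrix (Fin n) (Fin n) ℚ :=
  of fun r k => (if (k : ℕ) = r then (j + 1 + r : ℚ) else 0) +
    if (k : ℕ) = r - 1 then (r : ℚ) else 0

theorem diagonal_mul_binomMatrix_mul_diagonal :
    diagonal (fun r : Fin n => (j + 1 - r : ℚ)) * binomMatrix j n *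
      diagonal (fun s : Fin n => ((s : ℕ) + 1 : ℚ)) =
      bidiagonalFactor j n * weightedBinomMatrix j n := by
  ext r s
  rw [mul_diagonal, diagonal_mul, mul_apply]
  simp only [bidiagonalFactor, weightedBinomMatrix, binomMatrix, of_apply, add_mul, ite_mul,
    zero_mul, sum_add_distrib, Fin.sum_ite_val_eq r.isLt,
    Fin.sum_ite_val_eq (r.2.trans_le' (Nat.sub_le _ 1))]
  have hsub : ((r : ℕ) : ℚ) * weightedBinom j ((r : ℕ) - 1 : ℕ) s =
      (r : ℕ) * weightedBinom j ((r : ℕ) - 1) s := by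
    rcases Nat.eq_zero_or_pos r with h | h
    · simp [h]
    · rw [Nat.cast_sub h, Nat.cast_one]
  have := binom_row_relation j r s
  push_cast at this
  linear_combination this - hsub

theorem det_bidiagonalFactor :
    (bidiagonalFactor j n).det = ∏ r : Fin n, (j + 1 + r : ℚ) := by
  rw [det_of_isLowerTriangular]
  · refine prod_congr rfl fun r _ => ?_
    simp only [bidiagonalFactor, of_apply, ↓reduceIte, add_eq_left, ite_eq_right_iff,
      Nat.cast_eq_zero]
    omega
  · intro r k hrk
    have : (r : ℕ) < k := hrk
    simp only [bidiagonalFactor, of_apply]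
    rw [if_neg (by omega), if_neg (by omega), add_zero]

theorem det_weightedBinomMatrix (h : n ≤ j + 1) :
    (weightedBinomMatrix j n).det = ∏ r : Fin n, (j - r : ℚ) := by
  rw [det_of_isUpperTriangular]
  · refine prod_congr rfl fun r _ => ?_
    simp [weightedBinomMatrix, weightedBinom, binom_one (show (0 : ℤ) ≤ j - r by omega)]
  · intro r s hsr
    have : (s : ℕ) < r := hsr
    rcases eq_or_lt_of_le (Nat.succ_le_of_lt this) with hrs | hrs
    · simp [weightedBinomMatrix, weightedBinom, ← hrs]
    · simp [weightedBinomMatrix, weightedBinom, binom_of_neg (by omega : (s : ℤ) + 1 - r < 0)]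

theorem det_binomMatrix_mul_prod (h : n ≤ j + 1) :
    (binomMatrix j n).det * ∏ r ∈ range n, ((j + 1 - r) * (r + 1) : ℚ) =
      ∏ r ∈ range n, ((j + 1 + r) * (j - r) : ℚ) := by
  have := congrArg det (diagonal_mul_binomMatrix_mul_diagonal j n)
  rw [det_mul, det_mul, det_mul, det_diagonal, det_diagonal, det_bidiagonalFactor,
    det_weightedBinomMatrix j n h] at this
  rw [← Fin.prod_univ_eq_prod_range (fun r => (j + 1 - r) * (r + 1) : ℕ → ℚ),
    ← Fin.prod_univ_eq_prod_range (fun r => (j + 1 + r) * (j - r) : ℕ → ℚ),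
    prod_mul_distrib, prod_mul_distrib]
  linear_combination this

end

theorem succ_mul_prod_eq_choose_mul_prod (j n : ℕ) :
    (j + 1 : ℚ) * ∏ r ∈ range n, ((j + 1 + r) * (j - r) : ℚ) =
      (j + 1 - n) * (j + n).choose n * ∏ r ∈ range n, ((j + 1 - r) * (r + 1) : ℚ) := by
  induction n with
  | zero => simp
  | succ n ih =>
    have h := congrArg (Nat.cast : ℕ → ℚ) (Nat.add_one_mul_choose_eq (j + n) n)
    push_cast at h
    rw [prod_range_succ, prod_range_succ, ← mul_assoc, ih, ← add_assoc]
    push_cast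
    linear_combination
      (j - n : ℚ) * (j + 1 - n) * (∏ r ∈ range n, ((j + 1 - r) * (r + 1) : ℚ)) * h

theorem det_binomMatrix {j n : ℕ} (h : n ≤ j + 1) :
    (binomMatrix j n).det * (j + 1) = (j + 1 - n) * (j + n).choose n := by
  have hprod : ∏ r ∈ range n, ((j + 1 - r) * (r + 1) : ℚ) ≠ 0 :=
    prod_ne_zero_iff.2 fun r hr => by
      have : r < n := mem_range.1 hr
      have : (r : ℚ) < j + 1 := by exact_mod_cast (by omega : r < j + 1)
      exact mul_ne_zero (by linarith) (by positivity)
  refine mul_right_cancel₀ hprod ?_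
  linear_combination
    (j + 1 : ℚ) * det_binomMatrix_mul_prod j n h + succ_mul_prod_eq_choose_mul_prod j n

theorem catalan_mul_succ_eq_ballot (j : ℕ) :
    catalan j * (j + 1) = (j + 1 - (j - 1 : ℕ) : ℚ) * (j + (j - 1)).choose (j - 1) := by
  rcases j with _ | m
  · simp
  · have h : (m + 2) * catalan (m + 1) = 2 * (2 * m + 1).choose m := by
      rw [succ_mul_catalan_eq_centralBinom, Nat.centralBinom_eq_two_mul_choose,
        show 2 * (m + 1) = 2 * m + 1 + 1 by ring, Nat.choose_succ_succ', Nat.choose_symm_half]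
      ring
    rw [show m + 1 + (m + 1 - 1) = 2 * m + 1 by omega, Nat.add_sub_cancel]
    have := congrArg (Nat.cast : ℕ → ℚ) h
    push_cast at this ⊢
    linear_combination this

theorem binomial_matrix_det_general (j : ℕ) :
    Matrix.det (Matrix.of fun r s : Fin (j - 1) =>
        binom ((j : ℤ) + 1 - ((s : ℤ) + 1)) (((s : ℤ) + 1) - (r : ℤ))) =
      (catalan j : ℚ) ∧
    IsUnit (Matrix.of fun r s : Fin (j - 1) =>
        binom ((j : ℤ) + 1 - ((s : ℤ) + 1)) (((s : ℤ) + 1) - (r : ℤ))) := by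
  have hM : (Matrix.of fun r s : Fin (j - 1) =>
      binom ((j : ℤ) + 1 - ((s : ℤ) + 1)) (((s : ℤ) + 1) - (r : ℤ))) =
        binomMatrix j (j - 1) := by
    ext r s
    simp only [binomMatrix, of_apply, add_sub_add_right_eq_sub]
  have hdet : (binomMatrix j (j - 1)).det = catalan j :=
    mul_right_cancel₀ (by positivity : (j + 1 : ℚ) ≠ 0)
      ((det_binomMatrix (by omega)).trans (catalan_mul_succ_eq_ballot j).symm)
  rw [hM, isUnit_iff_isUnit_det, hdet, isUnit_iff_ne_zero, Nat.cast_ne_zero]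
  refine ⟨rfl, fun h => Nat.centralBinom_ne_zero j ?_⟩
  rw [← succ_mul_catalan_eq_centralBinom, h, mul_zero]

/-- For `j ≥ 2`, the `(j−1)×(j−1)` matrix with entries `c_{r,s} = binom(j+1−s, s−r)`
(row index `0 ≤ r ≤ j−2`, column index `1 ≤ s ≤ j−1`) has determinant the Catalan
number `C_j`; in particular it is invertible over `ℚ`. -/
theorem binomial_matrix_det (j : ℕ) (hj : 2 ≤ j) :
    Matrix.det (Matrix.of fun r s : Fin (j - 1) =>
        binom ((j : ℤ) + 1 - ((s : ℤ) + 1)) (((s : ℤ) + 1) - (r : ℤ))) =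
      (catalan j : ℚ) ∧
    IsUnit (Matrix.of fun r s : Fin (j - 1) =>
        binom ((j : ℤ) + 1 - ((s : ℤ) + 1)) (((s : ℤ) + 1) - (r : ℤ))) :=
  binomial_matrix_det_general j
end
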